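/- arXiv:2605.11337 — 6 statements merged into one kernel-verified Lean document; each statement's English description precedes it below -/
import Mathlib

section
/- For every finite node set V with n = |V|, adjacency matrix A ∈ ℕ^{V×V}, threshold vector ρ ∈ ℕ^V, and ε ∈ (0,1], the following two conditions are equivalent: (i) for every initial condition x(0) ∈ {0,1}^V the trajectory x(t+1) = Φ_ρ(x(t)) satisfies (1/n)∑_{i∈V} x_i(t) ≥ 1 − ε for all t ≥ n; (ii) (1/n)∑_{i∈V} ((Φ_ρ)^n(𝟎))_i ≥ 1 − ε. -/
/-- The linear threshold map `Φ_ρ` on configurations in `{0,1}^V`. -/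
def Phi {V : Type*} [Fintype V] (A : V → V → ℕ) (ρ : V → ℕ) (x : V → ℕ) : V → ℕ :=
  fun i => if ρ i ≤ ∑ j, A i j * x j then 1 else 0

lemma Phi_mono {V : Type*} [Fintype V] (A : V → V → ℕ) (ρ : V → ℕ)
    {x y : V → ℕ} (h : ∀ i, x i ≤ y i) : ∀ i, Phi A ρ x i ≤ Phi A ρ y i := by
  intro i
  simp only [Phi]
  split_ifs with h1 h2
  · rfl
  · exact absurd (h1.trans (Finset.sum_le_sum fun j _ =>
      Nat.mul_le_mul_left _ (h j))) h2
  · exact Nat.zero_le _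
  · rfl

lemma Phi_iter_mono {V : Type*} [Fintype V] (A : V → V → ℕ) (ρ : V → ℕ)
    (t : ℕ) {x y : V → ℕ} (h : ∀ i, x i ≤ y i) :
    ∀ i, (Phi A ρ)^[t] x i ≤ (Phi A ρ)^[t] y i := by
  induction t generalizing x y with
  | zero => simpa using h
  | succ n ih =>
    intro i
    rw [Function.iterate_succ_apply, Function.iterate_succ_apply]
    exact ih (Phi_mono A ρ h) i

lemma Phi_iter_zero_mono {V : Type*} [Fintype V] (A : V → V → ℕ) (ρ : V → ℕ)
    {s t : ℕ} (hst : s ≤ t) :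
    ∀ i, (Phi A ρ)^[s] (fun _ => 0) i ≤ (Phi A ρ)^[t] (fun _ => 0) i := by
  obtain ⟨k, rfl⟩ := Nat.exists_eq_add_of_le hst
  intro i
  have : (Phi A ρ)^[s + k] (fun _ => 0) = (Phi A ρ)^[s] ((Phi A ρ)^[k] fun _ => 0) := by
    rw [← Function.iterate_add_apply]
  rw [this]
  exact Phi_iter_mono A ρ s (fun j => Nat.zero_le _) i

/-- Requiring that at least a fraction `1 - ε` of the agents is in state `1`
at all times `t ≥ n` and for every initial condition is equivalent to the same
requirement at time `n` for the all-zeros initial condition. -/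
theorem fraction_ge_iff_zero_initial_condition
    {V : Type*} [Fintype V] [Nonempty V] (A : V → V → ℕ) (ρ : V → ℕ)
    (ε : ℝ) (hε0 : 0 < ε) (hε1 : ε ≤ 1) :
    (∀ x0 : V → ℕ, (∀ i, x0 i ≤ 1) → ∀ t : ℕ, Fintype.card V ≤ t →
        (1 : ℝ) - ε ≤ (∑ i, ((Phi A ρ)^[t] x0 i : ℝ)) / (Fintype.card V : ℝ)) ↔
      (1 : ℝ) - ε ≤
        (∑ i, ((Phi A ρ)^[Fintype.card V] (fun _ => 0) i : ℝ)) / (Fintype.card V : ℝ) := by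
  constructor
  · intro h
    exact h (fun _ => 0) (fun _ => Nat.zero_le _) (Fintype.card V) le_rfl
  · intro h x0 hx0 t ht
    refine h.trans ?_
    have hn : (0 : ℝ) < (Fintype.card V : ℝ) := by
      exact_mod_cast Fintype.card_pos
    apply div_le_div_of_nonneg_right ?_ hn.le
    apply Finset.sum_le_sum
    intro i _
    have h1 : (Phi A ρ)^[Fintype.card V] (fun _ => 0) i ≤ (Phi A ρ)^[t] (fun _ => 0) i :=
      Phi_iter_zero_mono A ρ ht i
    have h2 : (Phi A ρ)^[t] (fun _ => 0) i ≤ (Phi A ρ)^[t] x0 i :=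
      Phi_iter_mono A ρ t (fun j => Nat.zero_le _) i
    exact_mod_cast h1.trans h2
end

section
/- (Proposition 2) For every intervention ξ with respect to an initial statistics p⁰ on a finite type set Ω closed under threshold reduction, and for every z ∈ [0,1], one has φ_{p(ξ)}(z) = φ_{p⁰}(z) + ∑_{w∈Ω} ∑_{η=1}^{r_w} a_w(η,z) ξ_w(η), where a_w(η,z) = d_w (φ_{k_w, r_w − η}(z) − φ_{k_w, r_w}(z)) / ⟨p⁰,d⟩, and moreover a_w(η,z) ≥ 0 for all w ∈ Ω, 1 ≤ η ≤ r_w and z ∈ [0,1]. -/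
/-- `φ_{k,r}(z) = ∑_{u=r}^{k} (k choose u) z^u (1-z)^{k-u}`. -/
def phiKR (k r : ℕ) (z : ℝ) : ℝ :=
  ∑ u ∈ Finset.Icc r k, (k.choose u : ℝ) * z ^ u * (1 - z) ^ (k - u)

/-- `φ_p(z) = ⟨p,d⟩⁻¹ ∑_w p_w d_w φ_{k_w, r_w}(z)`. -/
noncomputable def phiP {Ω : Type*} [Fintype Ω] (d k r : Ω → ℕ) (p : Ω → ℝ) (z : ℝ) : ℝ :=
  (∑ w, p w * (d w : ℝ))⁻¹ * ∑ w, p w * (d w : ℝ) * phiKR (k w) (r w) z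

/-- The post-intervention statistics `p(ξ)`. -/
def postP {Ω : Type*} [Fintype Ω] [DecidableEq Ω] (down : Ω → ℕ → Ω)
    (r : Ω → ℕ) (ξ : Ω → ℕ → ℝ) : Ω → ℝ :=
  fun w => ∑ w', ∑ η ∈ Finset.range (r w' + 1), if down w' η = w then ξ w' η else 0

/-- The coefficient `a_w(η,z) = d_w (φ_{k_w, r_w−η}(z) − φ_{k_w, r_w}(z)) / ⟨p⁰,d⟩`. -/
noncomputable def aCoef {Ω : Type*} [Fintype Ω] (d k r : Ω → ℕ) (p0 : Ω → ℝ)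
    (w : Ω) (η : ℕ) (z : ℝ) : ℝ :=
  (d w : ℝ) * (phiKR (k w) (r w - η) z - phiKR (k w) (r w) z) / (∑ v, p0 v * (d v : ℝ))

lemma phiKR_nonneg (k r : ℕ) {z : ℝ} (hz : z ∈ Set.Icc (0:ℝ) 1) : 0 ≤ phiKR k r z := by
  unfold phiKR
  apply Finset.sum_nonneg
  intro u _
  have h0 : (0:ℝ) ≤ z := hz.1
  have h1 : (0:ℝ) ≤ 1 - z := by linarith [hz.2]
  positivity

lemma phiKR_anti (k : ℕ) {r r' : ℕ} (h : r' ≤ r) {z : ℝ} (hz : z ∈ Set.Icc (0:ℝ) 1) :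
    phiKR k r z ≤ phiKR k r' z := by
  unfold phiKR
  apply Finset.sum_le_sum_of_subset_of_nonneg (Finset.Icc_subset_Icc_left h)
  intro u _ _
  have h0 : (0:ℝ) ≤ z := hz.1
  have h1 : (0:ℝ) ≤ 1 - z := by linarith [hz.2]
  positivity

/-- (Proposition 2) `φ_{p(ξ)}(z) = φ_{p⁰}(z) + ∑_w ∑_{η=1}^{r_w} a_w(η,z) ξ_w(η)`,
and the coefficients `a_w(η,z)` are non-negative. -/
theorem phiP_post_intervention_decomposition
    {Ω : Type*} [Fintype Ω] [Nonempty Ω] [DecidableEq Ω]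
    (d k r : Ω → ℕ) (down : Ω → ℕ → Ω)
    (hd : ∀ w, 1 ≤ d w) (hrk : ∀ w, r w ≤ k w)
    (hinj : Function.Injective fun w => (d w, k w, r w))
    (hdown : ∀ w, ∀ j ≤ r w,
      d (down w j) = d w ∧ k (down w j) = k w ∧ r (down w j) = r w - j)
    (p0 : Ω → ℝ) (hp00 : ∀ w, 0 ≤ p0 w) (hp01 : ∀ w, p0 w ≤ 1)
    (hp0sum : ∑ w, p0 w = 1)
    (ξ : Ω → ℕ → ℝ)
    (hξ0 : ∀ w η, 0 ≤ ξ w η) (hξ1 : ∀ w η, ξ w η ≤ 1)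
    (hξsupp : ∀ w η, r w < η → ξ w η = 0)
    (hξsum : ∀ w, ∑ η ∈ Finset.range (r w + 1), ξ w η = p0 w) :
    (∀ z ∈ Set.Icc (0 : ℝ) 1,
      phiP d k r (postP down r ξ) z =
        phiP d k r p0 z +
          ∑ w, ∑ η ∈ Finset.Icc 1 (r w), aCoef d k r p0 w η z * ξ w η) ∧
    (∀ w : Ω, ∀ η : ℕ, 1 ≤ η → η ≤ r w → ∀ z ∈ Set.Icc (0 : ℝ) 1,
      0 ≤ aCoef d k r p0 w η z) := by
  have hD1 : (1:ℝ) ≤ ∑ v, p0 v * (d v : ℝ) := by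
    rw [← hp0sum]
    apply Finset.sum_le_sum
    intro w _
    have : (1:ℝ) ≤ (d w : ℝ) := by exact_mod_cast hd w
    nlinarith [hp00 w]
  have hDpos : (0:ℝ) < ∑ v, p0 v * (d v : ℝ) := lt_of_lt_of_le one_pos hD1
  have hDne : (∑ v, p0 v * (d v : ℝ)) ≠ 0 := ne_of_gt hDpos
  -- key reindexing lemma
  have key : ∀ f : Ω → ℝ, ∑ w, postP down r ξ w * f w
      = ∑ w', ∑ η ∈ Finset.range (r w' + 1), ξ w' η * f (down w' η) := by
    intro f
    unfold postP
    simp only [Finset.sum_mul]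
    rw [Finset.sum_comm]
    refine Finset.sum_congr rfl fun w' _ => ?_
    rw [Finset.sum_comm]
    refine Finset.sum_congr rfl fun η _ => ?_
    simp [ite_mul]
  constructor
  · intro z hz
    have hsum_d : ∑ w, postP down r ξ w * (d w : ℝ) = ∑ v, p0 v * (d v : ℝ) := by
      rw [key (fun w => (d w : ℝ))]
      refine Finset.sum_congr rfl fun w' _ => ?_
      rw [← hξsum w', Finset.sum_mul]
      refine Finset.sum_congr rfl fun η hη => ?_
      rw [(hdown w' η (Nat.lt_succ_iff.mp (Finset.mem_range.mp hη))).1]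
    have hsum_phi : ∑ w, postP down r ξ w * (d w : ℝ) * phiKR (k w) (r w) z
        = ∑ w', ∑ η ∈ Finset.range (r w' + 1),
            ξ w' η * ((d w' : ℝ) * phiKR (k w') (r w' - η) z) := by
      have := key (fun w => (d w : ℝ) * phiKR (k w) (r w) z)
      simp only [← mul_assoc] at this
      rw [this]
      refine Finset.sum_congr rfl fun w' _ => Finset.sum_congr rfl fun η hη => ?_
      obtain ⟨h1, h2, h3⟩ := hdown w' η (Nat.lt_succ_iff.mp (Finset.mem_range.mp hη))
      rw [h1, h2, h3, mul_assoc]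
    have step1 : ∀ w, ∑ η ∈ Finset.Icc 1 (r w), aCoef d k r p0 w η z * ξ w η
        = ∑ η ∈ Finset.range (r w + 1), aCoef d k r p0 w η z * ξ w η := by
      intro w
      apply Finset.sum_subset
      · intro η hη
        rw [Finset.mem_range, Nat.lt_succ_iff]
        exact (Finset.mem_Icc.mp hη).2
      · intro η hη hη'
        have : η = 0 := by
          rcases Nat.eq_zero_or_pos η with h | h
          · exact h
          · exact absurd (Finset.mem_Icc.mpr ⟨h, Nat.lt_succ_iff.mp (Finset.mem_range.mp hη)⟩) hη'
        subst this
        simp [aCoef]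
    have trans : ∑ w', ∑ η ∈ Finset.range (r w' + 1),
          ξ w' η * ((d w' : ℝ) * phiKR (k w') (r w' - η) z)
        = (∑ w, p0 w * (d w : ℝ) * phiKR (k w) (r w) z)
          + (∑ v, p0 v * (d v : ℝ)) *
            ∑ w, ∑ η ∈ Finset.Icc 1 (r w), aCoef d k r p0 w η z * ξ w η := by
      rw [Finset.mul_sum, ← Finset.sum_add_distrib]
      refine Finset.sum_congr rfl fun w _ => ?_
      rw [step1, ← hξsum w, Finset.sum_mul, Finset.sum_mul, Finset.mul_sum,
        ← Finset.sum_add_distrib]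
      refine Finset.sum_congr rfl fun η _ => ?_
      rw [aCoef]
      field_simp
      ring
    rw [phiP, phiP, hsum_d, hsum_phi, trans, mul_add, ← mul_assoc,
      inv_mul_cancel₀ hDne, one_mul]
  · intro w η _ hη z hz
    rw [aCoef]
    apply div_nonneg _ (le_of_lt hDpos)
    have := phiKR_anti (k w) (Nat.sub_le (r w) η) hz
    have hd' : (0:ℝ) ≤ (d w : ℝ) := Nat.cast_nonneg _
    nlinarith
end

section
/- (Lemma 4) For every intervention ξ with respect to an initial statistics p⁰ on a finite type set Ω closed under threshold reduction, and for every z ∈ [0,1], the derivative of z ↦ φ_{p(ξ)}(z) − z satisfies |(d/dz)(φ_{p(ξ)}(z) − z)| ≤ d_max · 2^{k_max + 1} · k_max / ⟨p⁰,d⟩ + 1, where d_max = max_{w∈Ω} d_w and k_max = max_{w∈Ω} k_w. -/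
open Finset

lemma hasDerivAt_pow_mul_one_sub_pow (a b : ℕ) (z : ℝ) :
    HasDerivAt (fun x : ℝ => x ^ a * (1 - x) ^ b)
      (a * z ^ (a - 1) * (1 - z) ^ b - b * z ^ a * (1 - z) ^ (b - 1)) z :=
  ((hasDerivAt_pow a z).fun_mul (((hasDerivAt_id' z).const_sub 1).fun_pow b)).congr_deriv (by ring)

lemma abs_deriv_pow_mul_one_sub_pow_le (a b : ℕ) {z : ℝ} (hz : z ∈ Set.Icc (0 : ℝ) 1) :
    |a * z ^ (a - 1) * (1 - z) ^ b - b * z ^ a * (1 - z) ^ (b - 1)| ≤ a + b := by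
  obtain ⟨hz0, hz1⟩ := hz
  have hz1' : 0 ≤ 1 - z := sub_nonneg.2 hz1
  have hterm (c m n : ℕ) : 0 ≤ c * z ^ m * (1 - z) ^ n ∧ c * z ^ m * (1 - z) ^ n ≤ c := by
    refine ⟨by positivity, ?_⟩
    rw [mul_assoc]
    exact mul_le_of_le_one_right c.cast_nonneg
      (mul_le_one₀ (pow_le_one₀ hz0 hz1) (by positivity) (pow_le_one₀ hz1' (by linarith)))
  obtain ⟨hA0, hA⟩ := hterm a (a - 1) b
  obtain ⟨hB0, hB⟩ := hterm b a (b - 1)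
  exact abs_sub_le_of_nonneg_of_le hA0 (hA.trans (le_add_of_nonneg_right b.cast_nonneg))
    hB0 (hB.trans (le_add_of_nonneg_left a.cast_nonneg))

lemma hasDerivAt_phiKR (k r : ℕ) (z : ℝ) :
    HasDerivAt (phiKR k r)
      (∑ u ∈ Icc r k, (k.choose u : ℝ) *
        (u * z ^ (u - 1) * (1 - z) ^ (k - u) - (k - u : ℕ) * z ^ u * (1 - z) ^ (k - u - 1))) z := by
  have hφ : phiKR k r = fun x => ∑ u ∈ Icc r k, (k.choose u : ℝ) * (x ^ u * (1 - x) ^ (k - u)) := by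
    funext x
    simp only [phiKR, mul_assoc]
  rw [hφ]
  exact HasDerivAt.fun_sum fun u _ =>
    (hasDerivAt_pow_mul_one_sub_pow u (k - u) z).const_mul (k.choose u : ℝ)

lemma sum_Icc_choose_le_two_pow (k r : ℕ) : ∑ u ∈ Icc r k, (k.choose u : ℝ) ≤ 2 ^ k := by
  calc ∑ u ∈ Icc r k, (k.choose u : ℝ) ≤ ∑ u ∈ range (k + 1), (k.choose u : ℝ) :=
        sum_le_sum_of_subset_of_nonneg
          (fun u hu => mem_range.2 (Nat.lt_succ_of_le (mem_Icc.1 hu).2)) (fun _ _ _ => by positivity)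
    _ = 2 ^ k := by exact_mod_cast Nat.sum_range_choose k

lemma abs_deriv_phiKR_le (k r : ℕ) {z : ℝ} (hz : z ∈ Set.Icc (0 : ℝ) 1) :
    |deriv (phiKR k r) z| ≤ k * 2 ^ k := by
  rw [(hasDerivAt_phiKR k r z).deriv]
  calc _ ≤ ∑ u ∈ Icc r k, (k.choose u : ℝ) * k := by
        refine (abs_sum_le_sum_abs _ _).trans (sum_le_sum fun u hu => ?_)
        have hku : (u : ℝ) + (k - u : ℕ) = k := by
          rw [← Nat.cast_add, Nat.add_sub_cancel' (mem_Icc.1 hu).2]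
        rw [abs_mul, Nat.abs_cast, ← hku]
        exact mul_le_mul_of_nonneg_left (abs_deriv_pow_mul_one_sub_pow_le _ _ hz) (by positivity)
    _ = (∑ u ∈ Icc r k, (k.choose u : ℝ)) * k := by rw [sum_mul]
    _ ≤ 2 ^ k * k := mul_le_mul_of_nonneg_right (sum_Icc_choose_le_two_pow k r) (by positivity)
    _ = k * 2 ^ k := mul_comm _ _

section phiP

variable {Ω : Type*} [Fintype Ω] (d k r : Ω → ℕ)

lemma hasDerivAt_phiP (p : Ω → ℝ) (z : ℝ) :
    HasDerivAt (phiP d k r p)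
      ((∑ w, p w * d w)⁻¹ * ∑ w, p w * d w * deriv (phiKR (k w) (r w)) z) z :=
  (HasDerivAt.fun_sum fun w _ =>
    ((hasDerivAt_phiKR (k w) (r w) z).differentiableAt.hasDerivAt.const_mul (p w * d w))).const_mul _

lemma abs_sum_mul_deriv_phiKR_le {p : Ω → ℝ} (hp : ∀ w, 0 ≤ p w) {kmax : ℕ}
    (hk : ∀ w, k w ≤ kmax) {z : ℝ} (hz : z ∈ Set.Icc (0 : ℝ) 1) :
    |∑ w, p w * d w * deriv (phiKR (k w) (r w)) z| ≤ (∑ w, p w * d w) * (kmax * 2 ^ kmax) := by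
  rw [sum_mul]
  refine (abs_sum_le_sum_abs _ _).trans (sum_le_sum fun w _ => ?_)
  have hpd : 0 ≤ p w * d w := mul_nonneg (hp w) (Nat.cast_nonneg _)
  rw [abs_mul, abs_of_nonneg hpd]
  refine mul_le_mul_of_nonneg_left ((abs_deriv_phiKR_le _ _ hz).trans ?_) hpd
  gcongr
  · exact_mod_cast hk w
  · norm_num
  · exact hk w

end phiP

section postP

variable {Ω : Type*} [Fintype Ω] [DecidableEq Ω] {down : Ω → ℕ → Ω} {r : Ω → ℕ}
  {ξ : Ω → ℕ → ℝ}

lemma postP_nonneg (hξ : ∀ w η, 0 ≤ ξ w η) (w : Ω) : 0 ≤ postP down r ξ w :=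
  sum_nonneg fun w' _ => sum_nonneg fun η _ => by split_ifs <;> simp [hξ]

lemma sum_postP_mul (f : Ω → ℝ) :
    ∑ w, postP down r ξ w * f w =
      ∑ w', ∑ η ∈ range (r w' + 1), ξ w' η * f (down w' η) := by
  simp only [postP, sum_mul]
  rw [sum_comm]
  refine sum_congr rfl fun w' _ => ?_
  rw [sum_comm]
  simp [ite_mul]

lemma sum_postP_mul_of_invariant {p0 : Ω → ℝ}
    (hξsum : ∀ w, ∑ η ∈ range (r w + 1), ξ w η = p0 w) {f : Ω → ℝ}
    (hf : ∀ w, ∀ j ≤ r w, f (down w j) = f w) :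
    ∑ w, postP down r ξ w * f w = ∑ w, p0 w * f w := by
  rw [sum_postP_mul]
  refine sum_congr rfl fun w _ => ?_
  rw [← hξsum, sum_mul]
  exact sum_congr rfl fun η hη => by rw [hf w η (Nat.lt_succ_iff.1 (mem_range.1 hη))]

end postP

theorem abs_deriv_phiP_post_sub_id_le_general
    {Ω : Type*} [Fintype Ω] [Nonempty Ω] [DecidableEq Ω]
    (d k r : Ω → ℕ) (down : Ω → ℕ → Ω)
    (hdown : ∀ w, ∀ j ≤ r w,
      d (down w j) = d w ∧ k (down w j) = k w ∧ r (down w j) = r w - j)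
    (p0 : Ω → ℝ) (hp00 : ∀ w, 0 ≤ p0 w)
    (hp0sum : ∑ w, p0 w = 1)
    (ξ : Ω → ℕ → ℝ)
    (hξ0 : ∀ w η, 0 ≤ ξ w η)
    (hξsum : ∀ w, ∑ η ∈ Finset.range (r w + 1), ξ w η = p0 w)
    (dmax kmax : ℕ)
    (hdmax : dmax = Finset.univ.sup' Finset.univ_nonempty d)
    (hkmax : kmax = Finset.univ.sup' Finset.univ_nonempty k) :
    ∀ z ∈ Set.Icc (0 : ℝ) 1,
      |deriv (fun z => phiP d k r (postP down r ξ) z - z) z| ≤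
        (dmax : ℝ) * 2 ^ (kmax + 1) * (kmax : ℝ) / (∑ w, p0 w * (d w : ℝ)) + 1 := by
  intro z hz
  set S := ∑ w, p0 w * (d w : ℝ)
  have hS : 0 ≤ S := sum_nonneg fun w _ => mul_nonneg (hp00 w) (Nat.cast_nonneg _)
  have hSd : S ≤ dmax := calc
    S ≤ ∑ w, p0 w * dmax := sum_le_sum fun w _ => mul_le_mul_of_nonneg_left
          (by exact_mod_cast hdmax ▸ le_sup' d (mem_univ w)) (hp00 w)
    _ = dmax := by rw [← sum_mul, hp0sum, one_mul]
  have hqd : ∑ w, postP down r ξ w * d w = S :=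
    sum_postP_mul_of_invariant hξsum fun w j hj => by rw [(hdown w j hj).1]
  have hT := abs_sum_mul_deriv_phiKR_le d k r (postP_nonneg (down := down) (r := r) hξ0)
    (fun w => hkmax ▸ le_sup' k (mem_univ w)) hz
  rw [hqd] at hT
  rw [((hasDerivAt_phiP d k r _ z).fun_sub (hasDerivAt_id' z)).deriv, hqd]
  -- `S⁻¹ * S` is not cancelled, so that `S = 0` (where `S⁻¹ = 0`) needs no separate case.
  calc _ ≤ |S⁻¹ * ∑ w, postP down r ξ w * d w * deriv (phiKR (k w) (r w)) z| + 1 :=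
        (abs_sub _ _).trans_eq (congrArg _ abs_one)
    _ ≤ S⁻¹ * (S * (kmax * 2 ^ kmax)) + 1 := by
        rw [abs_mul, abs_of_nonneg (inv_nonneg.2 hS)]
        gcongr
    _ ≤ S⁻¹ * (dmax * 2 ^ (kmax + 1) * kmax) + 1 := by
        gcongr S⁻¹ * ?_ + 1
        have hK : (0 : ℝ) ≤ dmax * (kmax * 2 ^ kmax) := by positivity
        calc S * (kmax * 2 ^ kmax) ≤ dmax * (kmax * 2 ^ kmax) := by gcongr
          _ ≤ dmax * 2 ^ (kmax + 1) * kmax := by rw [pow_succ]; linarith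
    _ = _ := by rw [inv_mul_eq_div]

/-- (Lemma 4) For every intervention `ξ`, the derivative of
`z ↦ φ_{p(ξ)}(z) − z` is bounded on `[0,1]` by
`d_max 2^{k_max+1} k_max / ⟨p⁰,d⟩ + 1`. -/
theorem abs_deriv_phiP_post_sub_id_le
    {Ω : Type*} [Fintype Ω] [Nonempty Ω] [DecidableEq Ω]
    (d k r : Ω → ℕ) (down : Ω → ℕ → Ω)
    (hd : ∀ w, 1 ≤ d w) (hrk : ∀ w, r w ≤ k w)
    (hinj : Function.Injective fun w => (d w, k w, r w))
    (hdown : ∀ w, ∀ j ≤ r w,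
      d (down w j) = d w ∧ k (down w j) = k w ∧ r (down w j) = r w - j)
    (p0 : Ω → ℝ) (hp00 : ∀ w, 0 ≤ p0 w) (hp01 : ∀ w, p0 w ≤ 1)
    (hp0sum : ∑ w, p0 w = 1)
    (ξ : Ω → ℕ → ℝ)
    (hξ0 : ∀ w η, 0 ≤ ξ w η) (hξ1 : ∀ w η, ξ w η ≤ 1)
    (hξsupp : ∀ w η, r w < η → ξ w η = 0)
    (hξsum : ∀ w, ∑ η ∈ Finset.range (r w + 1), ξ w η = p0 w)
    (dmax kmax : ℕ)
    (hdmax : dmax = Finset.univ.sup' Finset.univ_nonempty d)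
    (hkmax : kmax = Finset.univ.sup' Finset.univ_nonempty k) :
    ∀ z ∈ Set.Icc (0 : ℝ) 1,
      |deriv (fun z => phiP d k r (postP down r ξ) z - z) z| ≤
        (dmax : ℝ) * 2 ^ (kmax + 1) * (kmax : ℝ) / (∑ w, p0 w * (d w : ℝ)) + 1 :=
  abs_deriv_phiP_post_sub_id_le_general d k r down hdown p0 hp00 hp0sum ξ hξ0 hξsum dmax kmax hdmax
    hkmax
end

section
/- (Theorem 5(i), analytic form) Let ε ∈ (0,1], N a positive integer, and Δ_N = ((1−α_ε)/(2N)) · (d_max · 2^{k_max+1} · k_max / ⟨p⁰,d⟩ + 1), where d_max = max_{w∈Ω} d_w, k_max = max_{w∈Ω} k_w, d_min = min_{w∈Ω} d_w, and α_ε = ε·d_min/⟨p⁰,d⟩. If an intervention ξ satisfies the N+1 discretized constraints φ_{p(ξ)}(z_i) − z_i ≥ Δ at the grid points z_i = (1−α_ε)i/N, i = 0,…,N, for some Δ ≥ Δ_N, then φ_{p(ξ)}(z) − z ≥ Δ − Δ_N ≥ 0 for every z ∈ [0, 1−α_ε]. -/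
lemma abs_pow_sub_pow_le' (x y : ℝ) (hx : x ∈ Set.Icc (0:ℝ) 1) (hy : y ∈ Set.Icc (0:ℝ) 1)
    (n : ℕ) : |x ^ n - y ^ n| ≤ n * |x - y| := by
  induction n with
  | zero => simp
  | succ n ih =>
    have hx1 : |x| ≤ 1 := abs_le.mpr ⟨by linarith [hx.1], hx.2⟩
    have hyn : |y ^ n| ≤ 1 := by
      rw [abs_pow]; exact pow_le_one₀ (abs_nonneg y) (abs_le.mpr ⟨by linarith [hy.1], hy.2⟩)
    have key : x ^ (n+1) - y ^ (n+1) = x * (x ^ n - y ^ n) + (x - y) * y ^ n := by ring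
    rw [key]
    calc |x * (x ^ n - y ^ n) + (x - y) * y ^ n|
        ≤ |x * (x ^ n - y ^ n)| + |(x - y) * y ^ n| := abs_add_le _ _
      _ ≤ 1 * |x ^ n - y ^ n| + |x - y| * 1 := by
          rw [abs_mul, abs_mul]; gcongr
      _ ≤ n * |x - y| + |x - y| := by rw [one_mul, mul_one]; gcongr
      _ = (n + 1 : ℕ) * |x - y| := by push_cast; ring

lemma phiKR_lip (k r : ℕ) (z1 z2 : ℝ) (h1 : z1 ∈ Set.Icc (0:ℝ) 1)
    (h2 : z2 ∈ Set.Icc (0:ℝ) 1) :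
    |phiKR k r z1 - phiKR k r z2| ≤ 2 ^ k * k * |z1 - z2| := by
  have h1' : (1 - z1) ∈ Set.Icc (0:ℝ) 1 := ⟨by linarith [h1.2], by linarith [h1.1]⟩
  have h2' : (1 - z2) ∈ Set.Icc (0:ℝ) 1 := ⟨by linarith [h2.2], by linarith [h2.1]⟩
  unfold phiKR
  rw [← Finset.sum_sub_distrib]
  refine (Finset.abs_sum_le_sum_abs _ _).trans ?_
  have hterm : ∀ u ∈ Finset.Icc r k,
      |(k.choose u : ℝ) * z1 ^ u * (1 - z1) ^ (k - u) -
        (k.choose u : ℝ) * z2 ^ u * (1 - z2) ^ (k - u)|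
      ≤ (k.choose u : ℝ) * (k * |z1 - z2|) := by
    intro u hu
    have huk : u ≤ k := (Finset.mem_Icc.mp hu).2
    have key : (k.choose u : ℝ) * z1 ^ u * (1 - z1) ^ (k - u) -
        (k.choose u : ℝ) * z2 ^ u * (1 - z2) ^ (k - u)
        = (k.choose u : ℝ) * ((z1 ^ u - z2 ^ u) * (1 - z1) ^ (k-u)
            + z2 ^ u * ((1 - z1) ^ (k-u) - (1 - z2) ^ (k-u))) := by ring
    rw [key, abs_mul, abs_of_nonneg (by positivity : (0:ℝ) ≤ (k.choose u : ℝ))]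
    gcongr
    have hb1 : |(1 - z1) ^ (k-u)| ≤ 1 := by
      rw [abs_pow]; exact pow_le_one₀ (abs_nonneg _) (abs_le.mpr ⟨by linarith [h1'.1], h1'.2⟩)
    have hb2 : |z2 ^ u| ≤ 1 := by
      rw [abs_pow]; exact pow_le_one₀ (abs_nonneg _) (abs_le.mpr ⟨by linarith [h2.1], h2.2⟩)
    have hp1 : |z1 ^ u - z2 ^ u| ≤ u * |z1 - z2| := abs_pow_sub_pow_le' _ _ h1 h2 u
    have hp2 : |(1 - z1) ^ (k-u) - (1 - z2) ^ (k-u)| ≤ (k - u : ℕ) * |z1 - z2| := by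
      have := abs_pow_sub_pow_le' _ _ h1' h2' (k - u)
      simpa [abs_sub_comm, show (1 - z1) - (1 - z2) = -(z1 - z2) by ring] using this
    calc |(z1 ^ u - z2 ^ u) * (1 - z1) ^ (k-u)
            + z2 ^ u * ((1 - z1) ^ (k-u) - (1 - z2) ^ (k-u))|
        ≤ |z1 ^ u - z2 ^ u| * |(1 - z1) ^ (k-u)|
            + |z2 ^ u| * |(1 - z1) ^ (k-u) - (1 - z2) ^ (k-u)| := by
          refine (abs_add_le _ _).trans ?_; rw [abs_mul, abs_mul]
      _ ≤ (u * |z1 - z2|) * 1 + 1 * ((k - u : ℕ) * |z1 - z2|) := by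
          gcongr
      _ = ((u : ℝ) + (k - u : ℕ)) * |z1 - z2| := by ring
      _ = (k : ℝ) * |z1 - z2| := by
          congr 1; push_cast [Nat.cast_sub huk]; ring
  refine (Finset.sum_le_sum hterm).trans ?_
  rw [← Finset.sum_mul]
  have hcs : ∑ u ∈ Finset.Icc r k, (k.choose u : ℝ) ≤ 2 ^ k := by
    have hsub : Finset.Icc r k ⊆ Finset.range (k + 1) := by
      intro u hu; rw [Finset.mem_range]; exact Nat.lt_succ_of_le (Finset.mem_Icc.mp hu).2
    calc ∑ u ∈ Finset.Icc r k, (k.choose u : ℝ)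
        ≤ ∑ u ∈ Finset.range (k+1), (k.choose u : ℝ) :=
          Finset.sum_le_sum_of_subset_of_nonneg hsub (fun _ _ _ => by positivity)
      _ = 2 ^ k := by rw [← Nat.cast_sum]; rw [Nat.sum_range_choose]; push_cast; ring
  calc (∑ u ∈ Finset.Icc r k, (k.choose u : ℝ)) * ((k : ℝ) * |z1 - z2|)
      ≤ (2 ^ k : ℝ) * ((k : ℝ) * |z1 - z2|) := by gcongr
    _ = 2 ^ k * k * |z1 - z2| := by ring

lemma postP_sum {Ω : Type*} [Fintype Ω] [DecidableEq Ω] (down : Ω → ℕ → Ω) (r : Ω → ℕ)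
    (ξ : Ω → ℕ → ℝ) (c : Ω → ℝ) :
    ∑ w, postP down r ξ w * c w
      = ∑ w, ∑ η ∈ Finset.range (r w + 1), ξ w η * c (down w η) := by
  unfold postP
  simp_rw [Finset.sum_mul]
  rw [Finset.sum_comm]
  refine Finset.sum_congr rfl fun w' _ => ?_
  rw [Finset.sum_comm]
  refine Finset.sum_congr rfl fun η _ => ?_
  simp [ite_mul, Finset.sum_ite_eq]

/-- (Theorem 5(i), analytic form) If an intervention `ξ` satisfies the `N+1`
discretized constraints `φ_{p(ξ)}(z_i) − z_i ≥ Δ` at the grid points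
`z_i = (1−α_ε) i / N` for some `Δ ≥ Δ_N`, then
`φ_{p(ξ)}(z) − z ≥ Δ − Δ_N ≥ 0` on all of `[0, 1−α_ε]`. -/
theorem phiP_post_gt_of_discretized_constraints
    {Ω : Type*} [Fintype Ω] [Nonempty Ω] [DecidableEq Ω]
    (d k r : Ω → ℕ) (down : Ω → ℕ → Ω)
    (hd : ∀ w, 1 ≤ d w) (hrk : ∀ w, r w ≤ k w)
    (hinj : Function.Injective fun w => (d w, k w, r w))
    (hdown : ∀ w, ∀ j ≤ r w,
      d (down w j) = d w ∧ k (down w j) = k w ∧ r (down w j) = r w - j)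
    (p0 : Ω → ℝ) (hp00 : ∀ w, 0 ≤ p0 w) (hp01 : ∀ w, p0 w ≤ 1)
    (hp0sum : ∑ w, p0 w = 1)
    (ξ : Ω → ℕ → ℝ)
    (hξ0 : ∀ w η, 0 ≤ ξ w η) (hξ1 : ∀ w η, ξ w η ≤ 1)
    (hξsupp : ∀ w η, r w < η → ξ w η = 0)
    (hξsum : ∀ w, ∑ η ∈ Finset.range (r w + 1), ξ w η = p0 w)
    (ε : ℝ) (hε0 : 0 < ε) (hε1 : ε ≤ 1)
    (N : ℕ) (hN : 0 < N)
    (dmin dmax kmax : ℕ)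
    (hdmin : dmin = Finset.univ.inf' Finset.univ_nonempty d)
    (hdmax : dmax = Finset.univ.sup' Finset.univ_nonempty d)
    (hkmax : kmax = Finset.univ.sup' Finset.univ_nonempty k)
    (α ΔN Δ : ℝ)
    (hα : α = ε * (dmin : ℝ) / (∑ w, p0 w * (d w : ℝ)))
    (hΔN : ΔN = (1 - α) / (2 * (N : ℝ)) *
      ((dmax : ℝ) * 2 ^ (kmax + 1) * (kmax : ℝ) / (∑ w, p0 w * (d w : ℝ)) + 1))
    (hΔ : ΔN ≤ Δ)
    (hgrid : ∀ i : ℕ, i ≤ N →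
      Δ ≤ phiP d k r (postP down r ξ) ((1 - α) * (i : ℝ) / (N : ℝ)) -
            (1 - α) * (i : ℝ) / (N : ℝ)) :
    0 ≤ Δ - ΔN ∧
    ∀ z ∈ Set.Icc (0 : ℝ) (1 - α),
      Δ - ΔN ≤ phiP d k r (postP down r ξ) z - z := by
  set P : ℝ := ∑ w, p0 w * (d w : ℝ) with hPdef
  set q : Ω → ℝ := postP down r ξ with hqdef
  have hNR : (0:ℝ) < (N:ℝ) := by exact_mod_cast hN
  -- basic facts about q
  have hq0 : ∀ w, 0 ≤ q w := by
    intro w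
    refine Finset.sum_nonneg fun w' _ => Finset.sum_nonneg fun η _ => ?_
    split; exacts [hξ0 w' η, le_rfl]
  have hqsum : ∑ w, q w = 1 := by
    have h1 := postP_sum down r ξ (fun _ => (1:ℝ))
    simp only [mul_one] at h1
    rw [hqdef, h1]
    simp_rw [hξsum]; exact hp0sum
  have hqd : ∑ w, q w * (d w : ℝ) = P := by
    have h1 := postP_sum down r ξ (fun w => (d w : ℝ))
    rw [hqdef, h1, hPdef]
    refine Finset.sum_congr rfl fun w _ => ?_
    have : ∀ η ∈ Finset.range (r w + 1), ξ w η * (d (down w η) : ℝ) = ξ w η * (d w : ℝ) := by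
      intro η hη
      rw [(hdown w η (Nat.lt_succ_iff.mp (Finset.mem_range.mp hη))).1]
    rw [Finset.sum_congr rfl this, ← Finset.sum_mul, hξsum]
  -- bounds on dmin, P, α
  have hdmin1 : 1 ≤ dmin := by
    rw [hdmin]; exact Finset.le_inf' _ _ fun w _ => hd w
  have hdminle : ∀ w, dmin ≤ d w := fun w => hdmin ▸ Finset.inf'_le _ (Finset.mem_univ w)
  have hPd : (dmin : ℝ) ≤ P := by
    calc (dmin : ℝ) = ∑ w, p0 w * (dmin : ℝ) := by
          rw [← Finset.sum_mul, hp0sum, one_mul]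
      _ ≤ ∑ w, p0 w * (d w : ℝ) := by
          refine Finset.sum_le_sum fun w _ => ?_
          exact mul_le_mul_of_nonneg_left (by exact_mod_cast hdminle w) (hp00 w)
  have hP0 : (0:ℝ) < P := lt_of_lt_of_le (by exact_mod_cast hdmin1) hPd
  have hα0 : 0 ≤ α := by
    rw [hα]; positivity
  have hα1 : α ≤ 1 := by
    rw [hα, div_le_one hP0]
    nlinarith [hPd, Nat.cast_nonneg (α := ℝ) dmin]
  -- Lipschitz constant
  set L : ℝ := (dmax : ℝ) * 2 ^ kmax * (kmax : ℝ) / P with hLdef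
  have hL0 : 0 ≤ L := by positivity
  have hΔN2 : ΔN = (1 - α) / (2 * (N:ℝ)) * (2 * L + 1) := by
    rw [hΔN, hLdef, pow_succ]; ring
  have hΔN0 : 0 ≤ ΔN := by
    rw [hΔN2]
    have h1 : 0 ≤ (1 - α) / (2 * (N:ℝ)) := div_nonneg (by linarith) (by positivity)
    nlinarith
  refine ⟨by linarith, ?_⟩
  -- Lipschitz bound for phiP
  have hlip : ∀ z1 ∈ Set.Icc (0:ℝ) 1, ∀ z2 ∈ Set.Icc (0:ℝ) 1,
      |phiP d k r q z1 - phiP d k r q z2| ≤ L * |z1 - z2| := by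
    intro z1 h1 z2 h2
    unfold phiP
    rw [hqd, ← mul_sub, ← Finset.sum_sub_distrib, abs_mul,
      abs_of_pos (inv_pos.mpr hP0)]
    have hbound : |∑ w, (q w * (d w : ℝ) * phiKR (k w) (r w) z1
          - q w * (d w : ℝ) * phiKR (k w) (r w) z2)|
        ≤ ∑ w, q w * ((dmax : ℝ) * 2 ^ kmax * (kmax : ℝ) * |z1 - z2|) := by
      refine (Finset.abs_sum_le_sum_abs _ _).trans (Finset.sum_le_sum fun w _ => ?_)
      rw [show q w * (d w : ℝ) * phiKR (k w) (r w) z1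
            - q w * (d w : ℝ) * phiKR (k w) (r w) z2
          = (q w * (d w : ℝ)) * (phiKR (k w) (r w) z1 - phiKR (k w) (r w) z2) from by ring,
        abs_mul, abs_of_nonneg (mul_nonneg (hq0 w) (Nat.cast_nonneg _))]
      have hdw : d w ≤ dmax := hdmax ▸ Finset.le_sup' d (Finset.mem_univ w)
      have hkw : k w ≤ kmax := hkmax ▸ Finset.le_sup' k (Finset.mem_univ w)
      have hnat : d w * 2 ^ (k w) * k w ≤ dmax * 2 ^ kmax * kmax :=
        Nat.mul_le_mul (Nat.mul_le_mul hdw (Nat.pow_le_pow_right (by norm_num) hkw)) hkw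
      have hr : ((d w : ℝ) * 2 ^ (k w) * (k w : ℝ)) ≤ (dmax : ℝ) * 2 ^ kmax * (kmax : ℝ) := by
        exact_mod_cast hnat
      calc q w * (d w : ℝ) * |phiKR (k w) (r w) z1 - phiKR (k w) (r w) z2|
          ≤ q w * (d w : ℝ) * (2 ^ (k w) * (k w : ℝ) * |z1 - z2|) :=
            mul_le_mul_of_nonneg_left (phiKR_lip (k w) (r w) z1 z2 h1 h2)
              (mul_nonneg (hq0 w) (Nat.cast_nonneg _))
        _ = q w * (((d w : ℝ) * 2 ^ (k w) * (k w : ℝ)) * |z1 - z2|) := by ring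
        _ ≤ q w * (((dmax : ℝ) * 2 ^ kmax * (kmax : ℝ)) * |z1 - z2|) := by
            exact mul_le_mul_of_nonneg_left
              (mul_le_mul_of_nonneg_right hr (abs_nonneg _)) (hq0 w)
    calc P⁻¹ * |∑ w, (q w * (d w : ℝ) * phiKR (k w) (r w) z1
            - q w * (d w : ℝ) * phiKR (k w) (r w) z2)|
        ≤ P⁻¹ * ∑ w, q w * ((dmax : ℝ) * 2 ^ kmax * (kmax : ℝ) * |z1 - z2|) :=
          mul_le_mul_of_nonneg_left hbound (inv_nonneg.mpr hP0.le)
      _ = L * |z1 - z2| := by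
          rw [← Finset.sum_mul, hqsum, one_mul, hLdef]; ring
  -- key step: from a nearby grid point
  have key : ∀ z ∈ Set.Icc (0:ℝ) (1 - α), ∀ i : ℕ, i ≤ N →
      |z - (1 - α) * (i:ℝ) / (N:ℝ)| ≤ (1 - α) / (2 * (N:ℝ)) →
      Δ - ΔN ≤ phiP d k r q z - z := by
    intro z hz i hiN hdist
    set zi : ℝ := (1 - α) * (i:ℝ) / (N:ℝ) with hzidef
    have hziIcc : zi ∈ Set.Icc (0:ℝ) 1 := by
      constructor
      · rw [hzidef]; exact div_nonneg (mul_nonneg (by linarith) (Nat.cast_nonneg _)) hNR.le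
      · rw [hzidef, div_le_one hNR]
        have : (i:ℝ) ≤ (N:ℝ) := by exact_mod_cast hiN
        nlinarith
    have hzIcc : z ∈ Set.Icc (0:ℝ) 1 := ⟨hz.1, le_trans hz.2 (by linarith)⟩
    have hg := hgrid i hiN
    have hl := hlip z hzIcc zi hziIcc
    have hna := neg_abs_le (phiP d k r q z - phiP d k r q zi)
    have hna2 := le_abs_self (z - zi)
    have hLd : L * |z - zi| ≤ L * ((1 - α) / (2 * (N:ℝ))) :=
      mul_le_mul_of_nonneg_left hdist hL0
    have hLH : 0 ≤ L * ((1 - α) / (2 * (N:ℝ))) := mul_nonneg hL0 (div_nonneg (by linarith) (by positivity))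
    have e1 : ΔN = 2 * (L * ((1 - α) / (2 * (N:ℝ)))) + (1 - α) / (2 * (N:ℝ)) := by
      rw [hΔN2]; ring
    linarith
  -- choose the nearest grid point
  intro z hz
  by_cases hc : 1 - α ≤ 0
  · have hz0 : z = 0 := le_antisymm (le_trans hz.2 hc) hz.1
    have h1α : 1 - α = 0 := le_antisymm hc (by linarith)
    refine key z hz 0 (Nat.zero_le N) ?_
    rw [hz0, h1α]; simp
  · push_neg at hc
    set t : ℝ := z * (N:ℝ) / (1 - α) with htdef
    have ht0 : 0 ≤ t := by rw [htdef]; exact div_nonneg (mul_nonneg hz.1 hNR.le) hc.le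
    have htN : t ≤ (N:ℝ) := by
      rw [htdef, div_le_iff₀ hc]
      nlinarith [hz.2]
    set i : ℕ := ⌊t + 1/2⌋₊ with hidef
    have hi_le : (i:ℝ) ≤ t + 1/2 := Nat.floor_le (by linarith)
    have hi_gt : t + 1/2 < (i:ℝ) + 1 := Nat.lt_floor_add_one _
    have hiN : i ≤ N := by
      have h1 : (i:ℝ) < (N:ℝ) + 1 := by linarith
      have h2 : i < N + 1 := by exact_mod_cast h1
      omega
    have hz_eq : z = t * (1 - α) / (N:ℝ) := by
      rw [htdef]; field_simp
    have habs_ti : |t - (i:ℝ)| ≤ 1/2 := abs_le.mpr ⟨by linarith, by linarith⟩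
    refine key z hz i hiN ?_
    have h_eq : z - (1 - α) * (i:ℝ) / (N:ℝ) = (t - (i:ℝ)) * ((1 - α) / (N:ℝ)) := by
      rw [hz_eq]; ring
    rw [h_eq, abs_mul, abs_of_nonneg (div_nonneg (by linarith : (0:ℝ) ≤ 1 - α) hNR.le)]
    have := mul_le_mul_of_nonneg_right habs_ti
      (div_nonneg (by linarith : (0:ℝ) ≤ 1 - α) hNR.le)
    calc |t - (i:ℝ)| * ((1 - α) / (N:ℝ)) ≤ 1/2 * ((1 - α) / (N:ℝ)) := this
      _ = (1 - α) / (2 * (N:ℝ)) := by ring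
end

section
/- Let p be a statistics on a finite type set Ω with d_w ≥ d_min ≥ 1 for all w ∈ Ω, let ε ∈ (0,1], and set α_ε = ε·d_min/⟨p,d⟩ (so that 0 < α_ε ≤ 1). If φ_p(1−α_ε) > 1−α_ε, then ψ_p(1−α_ε) > 1−ε. -/
/-- `ψ_p(z) = ∑_w p_w φ_{k_w, r_w}(z)`. -/
def psiP {Ω : Type*} [Fintype Ω] (k r : Ω → ℕ) (p : Ω → ℝ) (z : ℝ) : ℝ :=
  ∑ w, p w * phiKR (k w) (r w) z

/-- With `α_ε = ε d_min / ⟨p,d⟩`, if `φ_p(1−α_ε) > 1−α_ε` then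
`ψ_p(1−α_ε) > 1−ε`. -/
theorem psiP_gt_of_phiP_gt_at_one_sub_alpha
    {Ω : Type*} [Fintype Ω] [Nonempty Ω] (d k r : Ω → ℕ)
    (dmin : ℕ) (hdmin1 : 1 ≤ dmin) (hdmin : ∀ w, dmin ≤ d w)
    (hrk : ∀ w, r w ≤ k w)
    (p : Ω → ℝ) (hp0 : ∀ w, 0 ≤ p w) (hp1 : ∀ w, p w ≤ 1) (hpsum : ∑ w, p w = 1)
    (ε : ℝ) (hε0 : 0 < ε) (hε1 : ε ≤ 1)
    (α : ℝ) (hα : α = ε * (dmin : ℝ) / (∑ w, p w * (d w : ℝ)))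
    (hφ : 1 - α < phiP d k r p (1 - α)) :
    1 - ε < psiP k r p (1 - α) := by
  set D := ∑ w, p w * (d w : ℝ) with hD
  have hDge : (dmin : ℝ) ≤ D := by
    calc (dmin : ℝ) = ∑ w, p w * (dmin : ℝ) := by
          rw [← Finset.sum_mul, hpsum, one_mul]
      _ ≤ D := Finset.sum_le_sum fun w _ =>
          mul_le_mul_of_nonneg_left (Nat.cast_le.mpr (hdmin w)) (hp0 w)
  have hdm0 : (0 : ℝ) < dmin := by exact_mod_cast hdmin1
  have hD0 : (0 : ℝ) < D := lt_of_lt_of_le hdm0 hDge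
  have hα0 : 0 < α := by
    rw [hα]; positivity
  have hα1 : α ≤ 1 := by
    rw [hα, div_le_one hD0]
    calc ε * (dmin : ℝ) ≤ 1 * (dmin : ℝ) := by
          exact mul_le_mul_of_nonneg_right hε1 hdm0.le
      _ = (dmin : ℝ) := one_mul _
      _ ≤ D := hDge
  have hz0 : (0 : ℝ) ≤ 1 - α := by linarith
  have hz1 : (0 : ℝ) ≤ α := hα0.le
  -- bounds on phiKR
  have hphi0 : ∀ w, 0 ≤ phiKR (k w) (r w) (1 - α) := by
    intro w
    apply Finset.sum_nonneg
    intro u hu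
    have : (1 : ℝ) - (1 - α) = α := by ring
    rw [this]
    positivity
  have hphi1 : ∀ w, phiKR (k w) (r w) (1 - α) ≤ 1 := by
    intro w
    have hsub : Finset.Icc (r w) (k w) ⊆ Finset.range (k w + 1) := by
      intro u hu
      simp only [Finset.mem_Icc] at hu
      simp [Nat.lt_succ_iff, hu.2]
    calc phiKR (k w) (r w) (1 - α)
        ≤ ∑ u ∈ Finset.range (k w + 1),
            ((k w).choose u : ℝ) * (1 - α) ^ u * (1 - (1 - α)) ^ (k w - u) := by
          apply Finset.sum_le_sum_of_subset_of_nonneg hsub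
          intro u _ _
          have : (1 : ℝ) - (1 - α) = α := by ring
          rw [this]; positivity
      _ = ((1 - α) + (1 - (1 - α))) ^ (k w) := by
          rw [add_pow]
          apply Finset.sum_congr rfl
          intro u _
          ring
      _ = 1 := by norm_num
  -- main computation
  have hS : (1 - α) * D < ∑ w, p w * (d w : ℝ) * phiKR (k w) (r w) (1 - α) := by
    rw [phiP] at hφ
    calc (1 - α) * D < (D⁻¹ * ∑ w, p w * (d w : ℝ) * phiKR (k w) (r w) (1 - α)) * D :=
          mul_lt_mul_of_pos_right hφ hD0
      _ = _ := by field_simp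
  have hαD : α * D = ε * (dmin : ℝ) := by
    rw [hα]; field_simp
  have hkey : (dmin : ℝ) * (1 - psiP k r p (1 - α)) ≤
      D - ∑ w, p w * (d w : ℝ) * phiKR (k w) (r w) (1 - α) := by
    have h1 : (dmin : ℝ) * (1 - psiP k r p (1 - α)) =
        ∑ w, (dmin : ℝ) * (p w * (1 - phiKR (k w) (r w) (1 - α))) := by
      have : ∑ w, (dmin : ℝ) * (p w * (1 - phiKR (k w) (r w) (1 - α))) =
          (dmin : ℝ) * ∑ w, p w - (dmin : ℝ) * ∑ w, p w * phiKR (k w) (r w) (1 - α) := by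
        rw [Finset.mul_sum, Finset.mul_sum, ← Finset.sum_sub_distrib]
        apply Finset.sum_congr rfl
        intro w _
        ring
      rw [this, psiP, hpsum]
      ring
    have h2 : D - ∑ w, p w * (d w : ℝ) * phiKR (k w) (r w) (1 - α) =
        ∑ w, p w * (d w : ℝ) * (1 - phiKR (k w) (r w) (1 - α)) := by
      rw [hD, ← Finset.sum_sub_distrib]
      apply Finset.sum_congr rfl
      intro w _
      ring
    rw [h1, h2]
    apply Finset.sum_le_sum
    intro w _
    have hnn : 0 ≤ 1 - phiKR (k w) (r w) (1 - α) := by linarith [hphi1 w]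
    calc (dmin : ℝ) * (p w * (1 - phiKR (k w) (r w) (1 - α)))
        = p w * (dmin : ℝ) * (1 - phiKR (k w) (r w) (1 - α)) := by ring
      _ ≤ p w * (d w : ℝ) * (1 - phiKR (k w) (r w) (1 - α)) := by
          apply mul_le_mul_of_nonneg_right _ hnn
          exact mul_le_mul_of_nonneg_left (Nat.cast_le.mpr (hdmin w)) (hp0 w)
  have hfin : (dmin : ℝ) * (1 - psiP k r p (1 - α)) < ε * (dmin : ℝ) := by
    calc (dmin : ℝ) * (1 - psiP k r p (1 - α))
        ≤ D - ∑ w, p w * (d w : ℝ) * phiKR (k w) (r w) (1 - α) := hkey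
      _ < D - (1 - α) * D := by linarith
      _ = α * D := by ring
      _ = ε * (dmin : ℝ) := hαD
  nlinarith [hfin, hdm0]
end

section
/- (Quantitative step in Theorem 5(ii), eqs. (24),(27),(28)) Let ε ∈ (0,1], N a positive integer, α_ε = ε·d_min/⟨p⁰,d⟩ and Δ_N = ((1−α_ε)/(2N))·(d_max·2^{k_max+1}·k_max/⟨p⁰,d⟩ + 1). Let ξ be an intervention satisfying φ_{p(ξ)}(z) > z for all z ∈ [0,1−α_ε], and suppose there is a type q ∈ Ω with r_q ≥ 1 and ξ_q(0) ≥ β_N, where β_N = Δ_N / min_{z∈[0,1−α_ε]} a_q(r_q,z) and a_q(η,z) = d_q(φ_{k_q, r_q−η}(z) − φ_{k_q, r_q}(z))/⟨p⁰,d⟩ (the minimum is positive, so β_N is well defined). Then the modified intervention ξ̂, equal to ξ except that ξ̂_q(0) = ξ_q(0) − β_N and ξ̂_q(r_q) = ξ_q(r_q) + β_N, is an intervention satisfying φ_{p(ξ̂)}(z) ≥ z + Δ_N for all z ∈ [0,1−α_ε] (in particular at every grid point z_i = (1−α_ε)i/N), and its cost satisfies C(ξ̂) ≤ C(ξ) +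 c_q(r_q)·β_N. -/
/-- `ξ` is an intervention with respect to the initial statistics `p⁰`. -/
def IsIntervention {Ω : Type*} [Fintype Ω] (r : Ω → ℕ) (p0 : Ω → ℝ)
    (ξ : Ω → ℕ → ℝ) : Prop :=
  (∀ w η, 0 ≤ ξ w η) ∧ (∀ w η, ξ w η ≤ 1) ∧ (∀ w η, r w < η → ξ w η = 0) ∧
  (∀ w, ∑ η ∈ Finset.range (r w + 1), ξ w η = p0 w)

/-- The cost `C(ξ) = ∑_w ∑_{η=0}^{r_w} c_w(η) ξ_w(η)` of an intervention. -/
def costC {Ω : Type*} [Fintype Ω] (r : Ω → ℕ) (c : Ω → ℕ → ℝ)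
    (ξ : Ω → ℕ → ℝ) : ℝ :=
  ∑ w, ∑ η ∈ Finset.range (r w + 1), c w η * ξ w η

lemma phiKR_sub (k r : ℕ) (hrk : r ≤ k) (z : ℝ) :
    phiKR k 0 z - phiKR k r z
      = ∑ u ∈ Finset.range r, (k.choose u : ℝ) * z ^ u * (1 - z) ^ (k - u) := by
  unfold phiKR
  have h1 : Finset.Icc 0 k = Finset.Ico 0 (k+1) := by rw [Finset.Ico_add_one_right_eq_Icc]
  have h2 : Finset.Icc r k = Finset.Ico r (k+1) := by rw [Finset.Ico_add_one_right_eq_Icc]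
  rw [h1, h2, Finset.range_eq_Ico,
    ← Finset.sum_Ico_consecutive _ (Nat.zero_le r) (by omega : r ≤ k+1)]
  ring

lemma phiKR_sub_pos (k r : ℕ) (hr : 1 ≤ r) (hrk : r ≤ k) (z : ℝ)
    (hz0 : 0 ≤ z) (hz1 : z < 1) : 0 < phiKR k 0 z - phiKR k r z := by
  rw [phiKR_sub k r hrk]
  have h0 : (0:ℝ) < (k.choose 0 : ℝ) * z ^ 0 * (1 - z) ^ (k - 0) := by
    have h1z : (0:ℝ) < 1 - z := by linarith
    simp only [Nat.choose_zero_right, Nat.cast_one, pow_zero, mul_one, one_mul, Nat.sub_zero]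
    positivity
  refine lt_of_lt_of_le h0 (Finset.single_le_sum
    (f := fun u => (k.choose u : ℝ) * z ^ u * (1 - z) ^ (k - u)) ?_ (Finset.mem_range.2 hr))
  intro i _
  have h1z : (0:ℝ) ≤ 1 - z := by linarith
  positivity

/-- (Quantitative step in Theorem 5(ii)) Shifting a mass `β_N` of type-`q`
agents from the zero intervention to the full threshold-reduction intervention
produces an intervention `ξ̂` that satisfies the strengthened constraint
`φ_{p(ξ̂)}(z) ≥ z + Δ_N` on `[0, 1−α_ε]` at an extra cost of at most
`c_q(r_q) β_N`; the minimum `m` of `a_q(r_q, ·)` on `[0, 1−α_ε]` is positive. -/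
theorem shifted_intervention_satisfies_discretized_constraints
    {Ω : Type*} [Fintype Ω] [Nonempty Ω] [DecidableEq Ω]
    (d k r : Ω → ℕ) (down : Ω → ℕ → Ω)
    (hd : ∀ w, 1 ≤ d w) (hrk : ∀ w, r w ≤ k w)
    (hinj : Function.Injective fun w => (d w, k w, r w))
    (hdown : ∀ w, ∀ j ≤ r w,
      d (down w j) = d w ∧ k (down w j) = k w ∧ r (down w j) = r w - j)
    (c : Ω → ℕ → ℝ) (hc0 : ∀ w, c w 0 = 0) (hcmono : ∀ w, Monotone (c w))
    (hcnonneg : ∀ w η, 0 ≤ c w η)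
    (p0 : Ω → ℝ) (hp00 : ∀ w, 0 ≤ p0 w) (hp01 : ∀ w, p0 w ≤ 1)
    (hp0sum : ∑ w, p0 w = 1)
    (ε : ℝ) (hε0 : 0 < ε) (hε1 : ε ≤ 1)
    (N : ℕ) (hN : 0 < N)
    (dmin dmax kmax : ℕ)
    (hdmin : dmin = Finset.univ.inf' Finset.univ_nonempty d)
    (hdmax : dmax = Finset.univ.sup' Finset.univ_nonempty d)
    (hkmax : kmax = Finset.univ.sup' Finset.univ_nonempty k)
    (α ΔN : ℝ)
    (hα : α = ε * (dmin : ℝ) / (∑ w, p0 w * (d w : ℝ)))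
    (hΔN : ΔN = (1 - α) / (2 * (N : ℝ)) *
      ((dmax : ℝ) * 2 ^ (kmax + 1) * (kmax : ℝ) / (∑ w, p0 w * (d w : ℝ)) + 1))
    (ξ : Ω → ℕ → ℝ) (hξ : IsIntervention r p0 ξ)
    (hξfeas : ∀ z ∈ Set.Icc (0 : ℝ) (1 - α), z < phiP d k r (postP down r ξ) z)
    (q : Ω) (hq : 1 ≤ r q)
    (m : ℝ) (hm : IsLeast ((fun z => aCoef d k r p0 q (r q) z) ''
      Set.Icc (0 : ℝ) (1 - α)) m)
    (β : ℝ) (hβ : β = ΔN / m)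
    (hq0 : β ≤ ξ q 0)
    (ξhat : Ω → ℕ → ℝ)
    (hξhat : ξhat = fun w η =>
      if w = q ∧ η = 0 then ξ q 0 - β
      else if w = q ∧ η = r q then ξ q (r q) + β
      else ξ w η) :
    0 < m ∧
    IsIntervention r p0 ξhat ∧
    (∀ z ∈ Set.Icc (0 : ℝ) (1 - α), z + ΔN ≤ phiP d k r (postP down r ξhat) z) ∧
    costC r c ξhat ≤ costC r c ξ + c q (r q) * β := by
  obtain ⟨hξ0, hξ1, hξtop, hξsum⟩ := hξ
  set S := ∑ w, p0 w * (d w : ℝ) with hS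
  have hS1 : (1:ℝ) ≤ S := by
    rw [hS, ← hp0sum]
    apply Finset.sum_le_sum
    intro w _
    have h1 : (1:ℝ) ≤ (d w : ℝ) := by exact_mod_cast hd w
    nlinarith [hp00 w]
  have hSpos : (0:ℝ) < S := by linarith
  have hdminle : ∀ w, (dmin:ℝ) ≤ (d w : ℝ) := by
    intro w
    exact_mod_cast Nat.cast_le.2 (hdmin ▸ Finset.inf'_le d (Finset.mem_univ w))
  have hdminS : (dmin:ℝ) ≤ S := by
    calc (dmin:ℝ) = ∑ w, p0 w * (dmin:ℝ) := by rw [← Finset.sum_mul, hp0sum, one_mul]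
    _ ≤ S := Finset.sum_le_sum fun w _ =>
        mul_le_mul_of_nonneg_left (hdminle w) (hp00 w)
  have hdmin0 : (0:ℝ) ≤ (dmin:ℝ) := Nat.cast_nonneg _
  have hα1 : α ≤ 1 := by
    rw [hα, div_le_one hSpos]
    nlinarith
  have hαpos : 0 < α := by
    rw [hα]
    apply div_pos _ hSpos
    apply mul_pos hε0
    have h1 : 1 ≤ dmin := by
      rw [hdmin]
      exact Finset.le_inf' _ _ fun w _ => hd w
    exact_mod_cast Nat.lt_of_lt_of_le Nat.zero_lt_one h1
  have hΔ0 : 0 ≤ ΔN := by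
    rw [hΔN]
    apply mul_nonneg
    · apply div_nonneg (by linarith) (by positivity)
    · have : (0:ℝ) ≤ (dmax : ℝ) * 2 ^ (kmax + 1) * (kmax : ℝ) / S :=
        div_nonneg (by positivity) hSpos.le
      linarith
  obtain ⟨⟨z0, hz0mem, hz0eq⟩, hmlb⟩ := hm
  have hmpos : 0 < m := by
    rw [← hz0eq]
    unfold aCoef
    rw [Nat.sub_self, ← hS]
    apply div_pos _ hSpos
    apply mul_pos
    · exact_mod_cast Nat.lt_of_lt_of_le Nat.zero_lt_one (hd q)
    · exact phiKR_sub_pos (k q) (r q) hq (hrk q) z0 hz0mem.1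
        (by have := hz0mem.2; linarith)
  have hβ0 : 0 ≤ β := by rw [hβ]; exact div_nonneg hΔ0 hmpos.le
  have hβm : m * β = ΔN := by rw [hβ]; field_simp
  have hrq0 : (0:ℕ) ≠ r q := by omega
  have hdownq0 : down q 0 = q := by
    apply hinj
    obtain ⟨h1, h2, h3⟩ := hdown q 0 (Nat.zero_le _)
    simp [Prod.ext_iff, h1, h2, h3]
  obtain ⟨hdq', hkq', hrq'⟩ := hdown q (r q) le_rfl
  have hdecomp : ∀ w η, ξhat w η = ξ w η +
      ((if w = q ∧ η = 0 then -β else 0) + (if w = q ∧ η = r q then β else 0)) := by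
    intro w η
    simp only [hξhat]
    have hne : r q ≠ 0 := by omega
    by_cases h1 : w = q ∧ η = 0
    · obtain ⟨hw, hη⟩ := h1
      subst hw; subst hη
      simp [hrq0, hne]
      ring
    · by_cases h2 : w = q ∧ η = r q
      · obtain ⟨hw, hη⟩ := h2
        subst hw; subst hη
        simp [hne]
      · simp [h1, h2]
  have hinner : ∀ (g : ℕ → ℝ), ∑ η ∈ Finset.range (r q + 1), g η * ξhat q η
      = (∑ η ∈ Finset.range (r q + 1), g η * ξ q η) + (g (r q) - g 0) * β := by
    intro g
    simp only [hdecomp, mul_add, Finset.sum_add_distrib, true_and]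
    have e1 : ∑ η ∈ Finset.range (r q + 1), g η * (if η = 0 then -β else 0)
        = -(g 0 * β) := by
      rw [Finset.sum_eq_single_of_mem 0 (Finset.mem_range.2 (Nat.succ_pos _))
        (fun b _ hb => by simp [hb])]
      simp
    have e2 : ∑ η ∈ Finset.range (r q + 1), g η * (if η = r q then β else 0)
        = g (r q) * β := by
      rw [Finset.sum_eq_single_of_mem (r q) (Finset.self_mem_range_succ _)
        (fun b _ hb => by simp [hb])]
      simp
    rw [e1, e2]; ring
  -- ξhat is an intervention
  have hsumhat : ∀ w, ∑ η ∈ Finset.range (r w + 1), ξhat w η = p0 w := by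
    intro w
    by_cases hw : w = q
    · subst hw
      have := hinner (fun _ => (1:ℝ))
      simp only [one_mul, sub_self, zero_mul, add_zero] at this
      rw [this, hξsum]
    · rw [← hξsum w]
      apply Finset.sum_congr rfl
      intro η _
      rw [hdecomp]; simp [hw]
  have hhat0 : ∀ w η, 0 ≤ ξhat w η := by
    intro w η
    simp only [hξhat]
    split_ifs with h1 h2
    · linarith
    · have := hξ0 q (r q); linarith
    · exact hξ0 w η
  have hpairle : ξ q 0 + ξ q (r q) ≤ p0 q := by
    have hsub : ({0, r q} : Finset ℕ) ⊆ Finset.range (r q + 1) := by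
      intro x hx
      simp only [Finset.mem_insert, Finset.mem_singleton] at hx
      rcases hx with h | h <;> simp [h] <;> omega
    have h := Finset.sum_le_sum_of_subset_of_nonneg hsub
      (fun i _ _ => hξ0 q i)
    rw [Finset.sum_pair hrq0] at h
    rw [← hξsum q]
    exact h
  have hhat1 : ∀ w η, ξhat w η ≤ 1 := by
    intro w η
    simp only [hξhat]
    split_ifs with h1 h2
    · have := hξ1 q 0; linarith
    · have := hp01 q; linarith
    · exact hξ1 w η
  have hhattop : ∀ w η, r w < η → ξhat w η = 0 := by
    intro w η hη
    simp only [hξhat]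
    split_ifs with h1 h2
    · omega
    · obtain ⟨hw, hη'⟩ := h2; subst hw; omega
    · exact hξtop w η hη
  -- push sums through postP
  have hpush : ∀ (ζ : Ω → ℕ → ℝ) (F : Ω → ℝ),
      ∑ w, postP down r ζ w * F w
        = ∑ w', ∑ η ∈ Finset.range (r w' + 1), ζ w' η * F (down w' η) := by
    intro ζ F
    unfold postP
    have step1 : ∀ w : Ω,
        (∑ w', ∑ η ∈ Finset.range (r w' + 1), if down w' η = w then ζ w' η else 0) * F w
        = ∑ w', ∑ η ∈ Finset.range (r w' + 1),
            if down w' η = w then ζ w' η * F w else 0 := by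
      intro w
      rw [Finset.sum_mul]
      refine Finset.sum_congr rfl fun w' _ => ?_
      rw [Finset.sum_mul]
      refine Finset.sum_congr rfl fun η _ => ?_
      rw [ite_mul, zero_mul]
    simp only [step1]
    rw [Finset.sum_comm]
    refine Finset.sum_congr rfl fun w' _ => ?_
    rw [Finset.sum_comm]
    refine Finset.sum_congr rfl fun η _ => ?_
    rw [Finset.sum_ite_eq Finset.univ (down w' η) (fun w => ζ w' η * F w)]
    simp
  have hdenom : ∀ (ζ : Ω → ℕ → ℝ),
      (∀ w, ∑ η ∈ Finset.range (r w + 1), ζ w η = p0 w) →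
      ∑ w, postP down r ζ w * (d w : ℝ) = S := by
    intro ζ hζ
    rw [hpush ζ (fun w => (d w : ℝ))]
    rw [hS]
    refine Finset.sum_congr rfl fun w' _ => ?_
    have hterm : ∀ η ∈ Finset.range (r w' + 1),
        ζ w' η * ((d (down w' η) : ℝ)) = ζ w' η * (d w' : ℝ) := by
      intro η hη
      rw [(hdown w' η (by simpa using Nat.lt_succ_iff.1 (Finset.mem_range.1 hη))).1]
    rw [Finset.sum_congr rfl hterm, ← Finset.sum_mul, hζ w', mul_comm]
  have hshift : ∀ (F : Ω → ℝ),
      ∑ w', ∑ η ∈ Finset.range (r w' + 1), ξhat w' η * F (down w' η)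
        = (∑ w', ∑ η ∈ Finset.range (r w' + 1), ξ w' η * F (down w' η))
          + β * (F (down q (r q)) - F q) := by
    intro F
    simp only [hdecomp, add_mul, Finset.sum_add_distrib]
    have c1 : ∑ w', ∑ η ∈ Finset.range (r w' + 1),
        (if w' = q ∧ η = 0 then -β else 0) * F (down w' η) = -β * F q := by
      rw [Finset.sum_eq_single_of_mem q (Finset.mem_univ q)
        (fun b _ hb => Finset.sum_eq_zero fun η _ => by simp [hb])]
      rw [Finset.sum_eq_single_of_mem 0 (Finset.mem_range.2 (Nat.succ_pos _))
        (fun b _ hb => by simp [hb])]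
      simp [hdownq0]
    have c2 : ∑ w', ∑ η ∈ Finset.range (r w' + 1),
        (if w' = q ∧ η = r q then β else 0) * F (down w' η)
          = β * F (down q (r q)) := by
      rw [Finset.sum_eq_single_of_mem q (Finset.mem_univ q)
        (fun b _ hb => Finset.sum_eq_zero fun η _ => by simp [hb])]
      rw [Finset.sum_eq_single_of_mem (r q) (Finset.self_mem_range_succ _)
        (fun b _ hb => by simp [hb])]
      simp
    rw [c1, c2]; ring
  have hmain : ∀ z ∈ Set.Icc (0:ℝ) (1 - α), z + ΔN ≤ phiP d k r (postP down r ξhat) z := by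
    intro z hz
    have hphieq : phiP d k r (postP down r ξhat) z
        = phiP d k r (postP down r ξ) z + β * aCoef d k r p0 q (r q) z := by
      unfold phiP
      have hfac : ∀ (p : Ω → ℝ), ∑ w, p w * (d w : ℝ) * phiKR (k w) (r w) z
          = ∑ w, p w * ((d w : ℝ) * phiKR (k w) (r w) z) :=
        fun p => Finset.sum_congr rfl fun w _ => by ring
      rw [hfac, hfac, hdenom ξ hξsum, hdenom ξhat hsumhat,
        hpush ξ (fun w => (d w : ℝ) * phiKR (k w) (r w) z),
        hpush ξhat (fun w => (d w : ℝ) * phiKR (k w) (r w) z),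
        hshift (fun w => (d w : ℝ) * phiKR (k w) (r w) z)]
      unfold aCoef
      rw [← hS, Nat.sub_self]
      simp only [hdq', hkq', hrq', Nat.sub_self]
      rw [div_eq_mul_inv]
      ring
    rw [hphieq]
    have h1 := hξfeas z hz
    have h2 : m ≤ aCoef d k r p0 q (r q) z := hmlb ⟨z, hz, rfl⟩
    nlinarith [mul_le_mul_of_nonneg_left h2 hβ0]
  have hcost : costC r c ξhat = costC r c ξ + c q (r q) * β := by
    unfold costC
    have hw : ∀ w, ∑ η ∈ Finset.range (r w + 1), c w η * ξhat w η
        = (∑ η ∈ Finset.range (r w + 1), c w η * ξ w η)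
          + (if w = q then c q (r q) * β else 0) := by
      intro w
      by_cases hwq : w = q
      · subst hwq
        rw [hinner (c w)]
        simp [hc0 w]
      · have hh : ∀ η, ξhat w η = ξ w η := fun η => by rw [hdecomp]; simp [hwq]
        simp [hh, hwq]
    simp only [hw, Finset.sum_add_distrib, Finset.sum_ite_eq' Finset.univ,
      Finset.mem_univ, if_true]
  exact ⟨hmpos, ⟨hhat0, hhat1, hhattop, hsumhat⟩, hmain, le_of_eq hcost⟩
end
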